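/- If T is a subcubic tree of order n and dissociation number ψ achieving ψ = (4n+2)/5, then T arises from K₂ by iteratively attaching P₅s. -/
import Mathlib
set_option maxHeartbeats 1000000

/-- `F` is a dissociation set of `G`: the induced subgraph `G[F]` has maximum degree at most 1. -/
def IsDissocSet {V : Type*} (G : SimpleGraph V) (F : Finset V) : Prop :=
  ∀ v ∈ F, ∀ u ∈ F, ∀ w ∈ F, G.Adj v u → G.Adj v w → u = w

/-- The dissociation number of `G`. -/
noncomputable def dissocNum {V : Type*} [Fintype V] (G : SimpleGraph V) : ℕ :=
  sSup {n | ∃ F : Finset V, IsDissocSet G F ∧ F.card = n}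

/-- `F` is a maximum dissociation set of `G`. -/
def IsMaxDissocSet {V : Type*} [Fintype V] (G : SimpleGraph V) (F : Finset V) : Prop :=
  IsDissocSet G F ∧ F.card = dissocNum G

/-- The number of maximum dissociation sets of `G`. -/
noncomputable def numMaxDissoc {V : Type*} [Fintype V] (G : SimpleGraph V) : ℕ :=
  {F : Finset V | IsMaxDissocSet G F}.ncard

/-- `G` is subcubic: every vertex has degree at most 3. -/
def Subcubic {V : Type*} (G : SimpleGraph V) : Prop :=
  ∀ v : V, (G.neighborSet v).ncard ≤ 3

/-- `ArisesFromK2 G S` says that the induced subgraph of `G` on `S` arises from `K₂` by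
iteratively attaching copies of `P₅`: attaching a `P₅` at a vertex `u` adds five new vertices
`x, y, z, j, k` and the edges `uz, zy, zj, yx, jk` (and no other edges). -/
inductive ArisesFromK2 {V : Type*} [DecidableEq V] (G : SimpleGraph V) : Finset V → Prop
  | base (a b : V) (hab : G.Adj a b) : ArisesFromK2 G {a, b}
  | attach (S : Finset V) (u x y z j k : V)
      (hS : ArisesFromK2 G S) (hu : u ∈ S)
      (hx : x ∉ S) (hy : y ∉ S) (hz : z ∉ S) (hj : j ∉ S) (hk : k ∉ S)
      (hcard : ({x, y, z, j, k} : Finset V).card = 5)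
      (e1 : G.Adj u z) (e2 : G.Adj z y) (e3 : G.Adj z j) (e4 : G.Adj y x) (e5 : G.Adj j k)
      (honly : ∀ p ∈ ({x, y, z, j, k} : Finset V), ∀ q ∈ S ∪ {x, y, z, j, k}, G.Adj p q →
        (p = z ∧ q = u) ∨ (p = z ∧ q = y) ∨ (p = z ∧ q = j) ∨ (p = y ∧ q = x) ∨
        (p = j ∧ q = k) ∨ (p = y ∧ q = z) ∨ (p = j ∧ q = z) ∨ (p = x ∧ q = y) ∨
        (p = k ∧ q = j)) :
      ArisesFromK2 G (S ∪ {x, y, z, j, k})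

set_option linter.unusedSectionVars false

open SimpleGraph Finset

section Helpers

variable {V : Type*} [DecidableEq V] {T : SimpleGraph V}

lemma dist_le_of_mem_support {w r x : V} (p : T.Walk w r) (hx : x ∈ p.support) :
    T.dist x r ≤ p.length := by
  calc T.dist x r ≤ (p.dropUntil x hx).length := SimpleGraph.dist_le _
  _ ≤ p.length := by
      have := congrArg SimpleGraph.Walk.length (p.take_spec hx)
      rw [SimpleGraph.Walk.length_append] at this
      omega

/-- existence of a parent: a neighbor strictly closer to the root. -/
lemma exists_parent' (hc : T.Connected) {r v : V} (h : v ≠ r) :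
    ∃ w, T.Adj v w ∧ T.dist r w + 1 = T.dist r v := by
  obtain ⟨p, hp⟩ := hc.exists_walk_length_eq_dist v r
  cases p with
  | nil => exact absurd rfl h
  | @cons _ w _ hadj q =>
    refine ⟨w, hadj, ?_⟩
    have h1 : T.dist r w ≤ q.length := by
      have := SimpleGraph.dist_le q
      have h' : T.dist w r = T.dist r w := SimpleGraph.dist_comm
      omega
    have h2 : T.dist v r = q.length + 1 := by simpa [Nat.add_comm] using hp.symm
    have h3 : T.dist r v ≤ T.dist r w + 1 := by
      obtain ⟨s, hs⟩ := hc.exists_walk_length_eq_dist r w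
      have := SimpleGraph.dist_le (s.concat hadj.symm)
      rwa [SimpleGraph.Walk.length_concat, hs] at this
    have h4 : T.dist v r = T.dist r v := SimpleGraph.dist_comm
    omega

lemma adj_dist_cases' (ht : T.IsTree) {r v w : V} (h : T.Adj v w) :
    T.dist r w + 1 = T.dist r v ∨ T.dist r v + 1 = T.dist r w := by
  have hc := ht.isConnected
  have htri1 : T.dist r v ≤ T.dist r w + 1 := by
    have := hc.dist_triangle (v := w) (u := r) (w := v)
    rwa [SimpleGraph.dist_eq_one_iff_adj.2 h.symm] at this
  have htri2 : T.dist r w ≤ T.dist r v + 1 := by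
    have := hc.dist_triangle (v := v) (u := r) (w := w)
    rwa [SimpleGraph.dist_eq_one_iff_adj.2 h] at this
  have hcv : T.dist v r = T.dist r v := SimpleGraph.dist_comm
  have hcw : T.dist w r = T.dist r w := SimpleGraph.dist_comm
  have hne : T.dist r v ≠ T.dist r w := by
    intro heq
    obtain ⟨p, hpp, hpl⟩ := hc.exists_path_of_dist v r
    obtain ⟨q, hqp, hql⟩ := hc.exists_path_of_dist w r
    have hvq : v ∉ q.support := by
      intro hv
      have h1 : T.dist v r ≤ (q.dropUntil v hv).length := SimpleGraph.dist_le _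
      have h2 : 1 ≤ (q.takeUntil v hv).length := by
        by_contra hcon
        push_neg at hcon
        have hlen : (q.takeUntil v hv).length = 0 := by omega
        exact h.ne ((q.takeUntil v hv).eq_of_length_eq_zero hlen).symm
      have h3 := congrArg SimpleGraph.Walk.length (q.take_spec hv)
      rw [SimpleGraph.Walk.length_append] at h3
      omega
    have hcons : (SimpleGraph.Walk.cons h q).IsPath :=
      (SimpleGraph.Walk.cons_isPath_iff h q).2 ⟨hqp, hvq⟩
    have := (ht.existsUnique_path v r).unique hcons hpp
    have hl := congrArg SimpleGraph.Walk.length this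
    rw [SimpleGraph.Walk.length_cons] at hl
    omega
  omega

lemma parent_unique' (ht : T.IsTree) {r v w₁ w₂ : V} (h1 : T.Adj v w₁) (h2 : T.Adj v w₂)
    (hd1 : T.dist r w₁ + 1 = T.dist r v) (hd2 : T.dist r w₂ + 1 = T.dist r v) : w₁ = w₂ := by
  have hc := ht.isConnected
  obtain ⟨p₁, hp₁, hl₁⟩ := hc.exists_path_of_dist w₁ r
  obtain ⟨p₂, hp₂, hl₂⟩ := hc.exists_path_of_dist w₂ r
  have hcv : T.dist v r = T.dist r v := SimpleGraph.dist_comm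
  have hc1 : T.dist w₁ r = T.dist r w₁ := SimpleGraph.dist_comm
  have hc2 : T.dist w₂ r = T.dist r w₂ := SimpleGraph.dist_comm
  have hv₁ : v ∉ p₁.support := fun hv => by
    have h' := dist_le_of_mem_support p₁ hv
    omega
  have hv₂ : v ∉ p₂.support := fun hv => by
    have h' := dist_le_of_mem_support p₂ hv
    omega
  have hic1 : (SimpleGraph.Walk.cons h1 p₁).IsPath :=
    (SimpleGraph.Walk.cons_isPath_iff h1 p₁).2 ⟨hp₁, hv₁⟩
  have hic2 : (SimpleGraph.Walk.cons h2 p₂).IsPath :=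
    (SimpleGraph.Walk.cons_isPath_iff h2 p₂).2 ⟨hp₂, hv₂⟩
  have heq := (ht.existsUnique_path v r).unique hic1 hic2
  have hsup := congrArg SimpleGraph.Walk.support heq
  rw [SimpleGraph.Walk.support_cons, SimpleGraph.Walk.support_cons,
    p₁.support_eq_cons, p₂.support_eq_cons] at hsup
  simp only [List.cons.injEq] at hsup
  exact hsup.2.1

lemma dist_eq_zero' (hc : T.Connected) {r v : V} (h : T.dist r v = 0) : v = r := by
  rcases (SimpleGraph.dist_eq_zero_iff_eq_or_not_reachable.1 h) with h' | h'
  · exact h'.symm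
  · exact absurd (hc.preconnected r v) h'

lemma dist_classify (hc : T.Connected) (r : V) (P : V → Prop) (hbase : P r)
    (step : ∀ v w, T.Adj v w → T.dist r w + 1 = T.dist r v → P w → P v) : ∀ v, P v := by
  intro v
  generalize hd : T.dist r v = k
  induction k using Nat.strong_induction_on generalizing v with
  | _ k IH =>
    by_cases hvr : v = r
    · exact hvr ▸ hbase
    · obtain ⟨w, hadj, hw⟩ := exists_parent' hc hvr
      exact step v w hadj hw (IH (T.dist r w) (by omega) w rfl)

lemma all_eq_of_sum {α : Type*} {s : Finset α} {f : α → ℕ} {b : ℕ}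
    (hle : ∀ a ∈ s, f a ≤ b) (hsum : ∑ a ∈ s, f a = s.card * b) : ∀ a ∈ s, f a = b := by
  intro a ha
  by_contra hne
  have hlt : ∑ x ∈ s, f x < ∑ _x ∈ s, b :=
    Finset.sum_lt_sum hle ⟨a, ha, lt_of_le_of_ne (hle a ha) hne⟩
  rw [Finset.sum_const, smul_eq_mul] at hlt
  omega

lemma card_five {a b c d e : V} (h1 : a ≠ b) (h2 : a ≠ c) (h3 : a ≠ d) (h4 : a ≠ e)
    (h5 : b ≠ c) (h6 : b ≠ d) (h7 : b ≠ e) (h8 : c ≠ d) (h9 : c ≠ e) (h10 : d ≠ e) :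
    ({a, b, c, d, e} : Finset V).card = 5 := by
  rw [Finset.card_insert_of_notMem (by simp [h1, h2, h3, h4]),
    Finset.card_insert_of_notMem (by simp [h5, h6, h7]),
    Finset.card_insert_of_notMem (by simp [h8, h9]),
    Finset.card_insert_of_notMem (by simp [h10]), Finset.card_singleton]

section fin
variable [Fintype V]

lemma le_dissocNum {F : Finset V} (hF : IsDissocSet T F) : F.card ≤ dissocNum T := by
  apply le_csSup
  · exact ⟨Fintype.card V, fun m ⟨F', _, hc⟩ => hc ▸ (F'.card_le_univ.trans_eq Finset.card_univ)⟩
  · exact ⟨F, hF, rfl⟩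

lemma exists_max_dissoc : ∃ F : Finset V, IsDissocSet T F ∧ F.card = dissocNum T := by
  have hne : {n | ∃ F : Finset V, IsDissocSet T F ∧ F.card = n}.Nonempty :=
    ⟨0, ∅, fun v hv => absurd hv (Finset.notMem_empty v), Finset.card_empty⟩
  have hbdd : BddAbove {n | ∃ F : Finset V, IsDissocSet T F ∧ F.card = n} :=
    ⟨Fintype.card V, fun m ⟨F', _, hc⟩ => hc ▸ (F'.card_le_univ.trans_eq Finset.card_univ)⟩
  obtain ⟨F, hF, hc⟩ := Nat.sSup_mem hne hbdd
  exact ⟨F, hF, hc⟩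

variable [DecidableRel T.Adj]

lemma degree_le_three (hsub : Subcubic T) (v : V) : T.degree v ≤ 3 := by
  have := hsub v
  rwa [Set.ncard_eq_toFinset_card', ← SimpleGraph.neighborFinset_def] at this

lemma no_C_at_max (ht : T.IsTree) {r w : V}
    (hdeg : T.degree w = 3) (hmax : ∀ u, T.dist r u ≤ T.dist r w) (hwr : w ≠ r) : False := by
  obtain ⟨p, hadj, hp⟩ := exists_parent' ht.isConnected hwr
  have hsub : T.neighborFinset w ⊆ {p} := by
    intro u hu
    rw [SimpleGraph.mem_neighborFinset] at hu
    rcases adj_dist_cases' ht hu with h1 | h2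
    · exact Finset.mem_singleton.2 (parent_unique' ht hu hadj h1 hp)
    · exact absurd (hmax u) (by omega)
  have hle := Finset.card_le_card hsub
  rw [Finset.card_singleton] at hle
  have hdeg' : (T.neighborFinset w).card = 3 := hdeg
  omega

/-- Counting lemma: equality in the dissociation bound forces local structure. -/
lemma structure_of_extremal (ht : T.IsTree) (hsub : Subcubic T) {F : Finset V}
    (hF : IsDissocSet T F) (hcard : 5 * F.card = 4 * Fintype.card V + 2) :
    (∀ f ∈ F, (T.neighborFinset f ∩ F).card = 1) ∧
    (∀ c, c ∉ F → T.degree c = 3 ∧ T.neighborFinset c ⊆ F) := by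
  classical
  set C : Finset V := Finset.univ \ F with hC
  set dF : V → ℕ := fun v => (T.neighborFinset v ∩ F).card with hdF
  set dC : V → ℕ := fun v => (T.neighborFinset v ∩ C).card with hdC
  have hsplit : ∀ v, dF v + dC v = T.degree v := by
    intro v
    have h1 : T.neighborFinset v ∩ C = T.neighborFinset v \ F := by
      ext w; simp [hC]
    show (T.neighborFinset v ∩ F).card + (T.neighborFinset v ∩ C).card = _
    rw [h1]
    exact Finset.card_inter_add_card_sdiff _ _
  have hsum : ∑ v : V, T.degree v = 2 * T.edgeFinset.card :=
    SimpleGraph.sum_degrees_eq_twice_card_edges T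
  have hedge : T.edgeFinset.card + 1 = Fintype.card V := ht.card_edgeFinset
  have hFsub : F ⊆ Finset.univ := Finset.subset_univ F
  have hsum2 : ∑ v ∈ C, T.degree v + ∑ v ∈ F, T.degree v = ∑ v : V, T.degree v :=
    Finset.sum_sdiff hFsub
  have hdouble : ∑ f ∈ F, dC f = ∑ c ∈ C, dF c := by
    have h1 : ∀ v : V, ∀ s : Finset V, (T.neighborFinset v ∩ s).card
        = ∑ w ∈ s, if T.Adj v w then 1 else 0 := by
      intro v s
      rw [← Finset.card_filter]
      congr 1
      ext w
      simp [and_comm]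
    calc ∑ f ∈ F, dC f = ∑ f ∈ F, ∑ c ∈ C, if T.Adj f c then 1 else 0 := by
          refine Finset.sum_congr rfl fun f _ => h1 f C
      _ = ∑ c ∈ C, ∑ f ∈ F, if T.Adj c f then 1 else 0 := by
          rw [Finset.sum_comm]
          refine Finset.sum_congr rfl fun c _ => Finset.sum_congr rfl fun f _ => by
            by_cases hfc : T.Adj f c
            · simp [hfc, hfc.symm]
            · have : ¬ T.Adj c f := fun h => hfc h.symm
              simp [hfc, this]
      _ = ∑ c ∈ C, dF c := by
          refine Finset.sum_congr rfl fun c _ => (h1 c F).symm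
  have hdFle : ∀ f ∈ F, dF f ≤ 1 := by
    intro f hf
    rw [Finset.card_le_one]
    intro u hu w hw
    simp only [Finset.mem_inter, SimpleGraph.mem_neighborFinset] at hu hw
    exact hF f hf u hu.2 w hw.2 hu.1 hw.1
  have hdegle : ∀ c ∈ C, T.degree c ≤ 3 := fun c _ => degree_le_three hsub c
  have hS1 : ∑ f ∈ F, dF f ≤ F.card * 1 := by
    calc ∑ f ∈ F, dF f ≤ ∑ _f ∈ F, 1 := Finset.sum_le_sum hdFle
    _ = F.card * 1 := by rw [Finset.sum_const, smul_eq_mul]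
  have hS3 : ∑ c ∈ C, T.degree c ≤ C.card * 3 := by
    calc ∑ c ∈ C, T.degree c ≤ ∑ _c ∈ C, 3 := Finset.sum_le_sum hdegle
    _ = C.card * 3 := by rw [Finset.sum_const, smul_eq_mul]
  have hsplitF : ∑ f ∈ F, T.degree f = ∑ f ∈ F, dF f + ∑ f ∈ F, dC f := by
    rw [← Finset.sum_add_distrib]
    exact (Finset.sum_congr rfl fun f _ => (hsplit f).symm)
  have hsplitC : ∑ c ∈ C, T.degree c = ∑ c ∈ C, dF c + ∑ c ∈ C, dC c := by
    rw [← Finset.sum_add_distrib]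
    exact (Finset.sum_congr rfl fun c _ => (hsplit c).symm)
  have hCcard : C.card + F.card = Fintype.card V := by
    rw [hC, Finset.card_sdiff_of_subset hFsub, Finset.card_univ]
    have := Finset.card_le_card hFsub
    rw [Finset.card_univ] at this
    omega
  have key1 : ∑ f ∈ F, dF f = F.card * 1 ∧ (∑ c ∈ C, dC c = 0)
      ∧ ∑ c ∈ C, T.degree c = C.card * 3 := by
    omega
  obtain ⟨k1, k2, k3⟩ := key1
  have hdFone := all_eq_of_sum hdFle k1
  have hdegthree := all_eq_of_sum hdegle k3
  have hdCzero : ∀ c ∈ C, dC c = 0 := by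
    intro c hc
    exact Finset.sum_eq_zero_iff.1 k2 c hc
  constructor
  · intro f hf; simpa using hdFone f hf
  · intro c hc
    have hcC : c ∈ C := by simp [hC, hc]
    refine ⟨by simpa using hdegthree c hcC, ?_⟩
    intro w hw
    by_contra hwF
    have hwC : w ∈ C := by simp [hC, hwF]
    have hmem : w ∈ T.neighborFinset c ∩ C := Finset.mem_inter.2 ⟨hw, hwC⟩
    have h0 := hdCzero c hcC
    rw [hdC] at h0
    rw [Finset.card_eq_zero] at h0
    simp only [h0] at hmem
    exact absurd hmem (Finset.notMem_empty w)
end fin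
end Helpers

lemma arises_lift {V : Type*} [DecidableEq V] (T : SimpleGraph V) (s : Set V)
    [DecidablePred (· ∈ s)] {A : Finset ↥s} (h : ArisesFromK2 (T.induce s) A) :
    ArisesFromK2 T (A.image Subtype.val) := by
  have hadj' : ∀ a b : ↥s, (T.induce s).Adj a b ↔ T.Adj ↑a ↑b := fun a b => SimpleGraph.comap_adj
  induction h with
  | base a b hab =>
      rw [Finset.image_insert, Finset.image_singleton]
      exact ArisesFromK2.base _ _ ((hadj' _ _).1 hab)
  | attach S u x y z j k hS hu hx hy hz hj hk hcard e1 e2 e3 e4 e5 honly ih =>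
      have himg : ∀ (B : Finset ↥s) (w : ↥s), (w : V) ∈ B.image Subtype.val ↔ w ∈ B := by
        intro B w
        simp [Finset.mem_image, Subtype.ext_iff]
      have hset : ({x, y, z, j, k} : Finset ↥s).image Subtype.val
          = ({(↑x : V), (↑y : V), (↑z : V), (↑j : V), (↑k : V)} : Finset V) := by
        ext w
        constructor
        · intro hw
          obtain ⟨w₀, hw₀, rfl⟩ := Finset.mem_image.1 hw
          simp only [Finset.mem_insert, Finset.mem_singleton] at hw₀ ⊢
          rcases hw₀ with rfl|rfl|rfl|rfl|rfl <;> tauto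
        · intro hw
          simp only [Finset.mem_insert, Finset.mem_singleton] at hw
          rcases hw with rfl|rfl|rfl|rfl|rfl <;>
            refine Finset.mem_image.2 ⟨_, by simp, rfl⟩
      rw [Finset.image_union, hset]
      refine ArisesFromK2.attach _ ↑u ↑x ↑y ↑z ↑j ↑k ih ((himg S u).2 hu)
        (fun hc => hx ((himg S x).1 hc)) (fun hc => hy ((himg S y).1 hc))
        (fun hc => hz ((himg S z).1 hc)) (fun hc => hj ((himg S j).1 hc))
        (fun hc => hk ((himg S k).1 hc)) ?_
        ((hadj' _ _).1 e1) ((hadj' _ _).1 e2)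
        ((hadj' _ _).1 e3) ((hadj' _ _).1 e4)
        ((hadj' _ _).1 e5) ?_
      · rw [← hset, Finset.card_image_of_injective _ Subtype.val_injective]
        exact hcard
      · intro p hp q hq hpq
        rw [← hset] at hp
        rw [← hset, ← Finset.image_union] at hq
        obtain ⟨p₀, hp₀, rfl⟩ := Finset.mem_image.1 hp
        obtain ⟨q₀, hq₀, rfl⟩ := Finset.mem_image.1 hq
        have hadj : (T.induce s).Adj p₀ q₀ := (hadj' _ _).2 hpq
        have hconcl := honly p₀ hp₀ q₀ hq₀ hadj
        simp only [Subtype.ext_iff] at hconcl ⊢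
        exact hconcl

universe u

theorem main_aux : ∀ (n : ℕ) (V : Type u) [Fintype V] [DecidableEq V] (T : SimpleGraph V),
    Fintype.card V = n → T.IsTree → Subcubic T → 5 * dissocNum T = 4 * n + 2 →
    ArisesFromK2 T Finset.univ := by
  intro n
  induction n using Nat.strong_induction_on with
  | _ n IH =>
  intro V instF instD T hn ht hsub hpsi
  classical
  letI : DecidableRel T.Adj := Classical.decRel _
  obtain ⟨F, hF, hFc⟩ := exists_max_dissoc (T := T)
  have hpsiF : 5 * F.card = 4 * n + 2 := by rw [hFc]; exact hpsi
  obtain ⟨P1, P2⟩ := structure_of_extremal ht hsub hF (by rw [hn]; exact hpsiF)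
  have hconn := ht.isConnected
  by_cases hCall : ∀ v : V, v ∈ F
  · -- K₂ case
    have : Nonempty V := hconn.nonempty
    obtain ⟨a⟩ := this
    have hFu : F = Finset.univ := Finset.eq_univ_iff_forall.2 hCall
    have hNa1 : (T.neighborFinset a ∩ F).card = 1 := P1 a (hCall a)
    rw [hFu, Finset.inter_univ] at hNa1
    obtain ⟨b, hNa⟩ := Finset.card_eq_one.1 hNa1
    have hab : T.Adj a b := (T.mem_neighborFinset a b).1 (hNa ▸ Finset.mem_singleton_self b)
    have hNb1 : (T.neighborFinset b ∩ F).card = 1 := P1 b (hCall b)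
    rw [hFu, Finset.inter_univ] at hNb1
    obtain ⟨c, hNbc⟩ := Finset.card_eq_one.1 hNb1
    have hac : a ∈ ({c} : Finset V) := hNbc ▸ (T.mem_neighborFinset b a).2 hab.symm
    rw [Finset.mem_singleton] at hac
    have hNb : T.neighborFinset b = {a} := by rw [hNbc, ← hac]
    have cov : ∀ v, v ∈ ({a, b} : Finset V) := by
      refine dist_classify hconn a _ (by simp) ?_
      intro v w hadj _ hw
      have hvN : v ∈ T.neighborFinset w := (T.mem_neighborFinset w v).2 hadj.symm
      rcases Finset.mem_insert.1 hw with rfl | hw'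
      · rw [hNa] at hvN
        simp only [Finset.mem_singleton] at hvN
        simp [hvN]
      · rw [Finset.mem_singleton] at hw'
        subst hw'
        rw [hNb] at hvN
        simp only [Finset.mem_singleton] at hvN
        simp [hvN]
    have huniv : ({a, b} : Finset V) = Finset.univ := Finset.eq_univ_iff_forall.2 cov
    rw [← huniv]
    exact ArisesFromK2.base a b hab
  · push_neg at hCall
    obtain ⟨r, hrF⟩ := hCall
    obtain ⟨hdegr, hNrF⟩ := P2 r hrF
    have hNr3 : (T.neighborFinset r).card = 3 := hdegr
    obtain ⟨f1, f2, f3, h12, h13, h23, hNr⟩ := Finset.card_eq_three.1 hNr3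
    obtain ⟨v0, _, hmax'⟩ :=
      Finset.exists_max_image (Finset.univ : Finset V) (T.dist r) ⟨r, Finset.mem_univ r⟩
    have hmax : ∀ u, T.dist r u ≤ T.dist r v0 := fun u => hmax' u (Finset.mem_univ u)
    have hr0 : T.dist r r = 0 := SimpleGraph.dist_self
    have hzero : ∀ {v}, T.dist r v = 0 → v = r := fun h => dist_eq_zero' hconn h
    have hnoC : ∀ w, w ∉ F → w ≠ r → (∀ u, T.dist r u ≤ T.dist r w) → False :=
      fun w h1 h2 h3 => no_C_at_max ht (P2 w h1).1 h3 h2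
    by_cases hD2 : T.dist r v0 ≤ 2
    · -- spider case: T is the 7-vertex spider
      have spider_leg : ∀ f, T.Adj r f → ∃ f', f' ∈ F ∧ T.Adj f f' ∧
          T.dist r f = 1 ∧ T.dist r f' = 2 ∧
          T.neighborFinset f = {r, f'} ∧ T.neighborFinset f' = {f} := by
        intro f hrf
        have hfF : f ∈ F := hNrF ((T.mem_neighborFinset r f).2 hrf)
        have hdf : T.dist r f = 1 := by
          rcases adj_dist_cases' ht (r := r) hrf with h | h <;> omega
        obtain ⟨f', hNfF⟩ := Finset.card_eq_one.1 (P1 f hfF)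
        have hf'mem := hNfF ▸ Finset.mem_singleton_self f'
        have hf'F : f' ∈ F := (Finset.mem_inter.1 hf'mem).2
        have haff' : T.Adj f f' :=
          (T.mem_neighborFinset f f').1 (Finset.mem_inter.1 hf'mem).1
        have hf'r : f' ≠ r := fun h => hrF (h ▸ hf'F)
        have hdf' : T.dist r f' = 2 := by
          rcases adj_dist_cases' ht (r := r) haff' with h | h
          · exact absurd (hzero (by omega)) hf'r
          · omega
        have hNf : T.neighborFinset f = {r, f'} := by
          apply Finset.Subset.antisymm
          · intro w hw
            have hfw : T.Adj f w := (T.mem_neighborFinset f w).1 hw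
            rcases adj_dist_cases' ht (r := r) hfw with h | h
            · have : w = r := hzero (by omega)
              simp [this]
            · by_cases hwF : w ∈ F
              · have hmem : w ∈ T.neighborFinset f ∩ F := Finset.mem_inter.2 ⟨hw, hwF⟩
                rw [hNfF, Finset.mem_singleton] at hmem
                simp [hmem]
              · exfalso
                refine hnoC w hwF (fun he => ?_) (fun u => ?_)
                · rw [he, hr0] at h; omega
                · have := hmax u; omega
          · intro w hw
            rcases Finset.mem_insert.1 hw with rfl | hw'
            · exact (T.mem_neighborFinset f w).2 hrf.symm
            · rw [Finset.mem_singleton] at hw'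
              subst hw'
              exact (T.mem_neighborFinset f w).2 haff'
        have hNf' : T.neighborFinset f' = {f} := by
          apply Finset.Subset.antisymm
          · intro w hw
            have hfw : T.Adj f' w := (T.mem_neighborFinset f' w).1 hw
            rcases adj_dist_cases' ht (r := r) hfw with h | h
            · have := parent_unique' ht hfw haff'.symm h (by omega)
              simp [this]
            · exfalso; have := hmax w; omega
          · intro w hw
            rw [Finset.mem_singleton] at hw
            subst hw
            exact (T.mem_neighborFinset f' w).2 haff'.symm
        exact ⟨f', hf'F, haff', hdf, hdf', hNf, hNf'⟩
      have hadjr : ∀ w, w ∈ ({f1, f2, f3} : Finset V) → T.Adj r w := by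
        intro w hw
        exact (T.mem_neighborFinset r w).1 (by rw [hNr]; exact hw)
      have hrf1 : T.Adj r f1 := hadjr f1 (by simp)
      have hrf2 : T.Adj r f2 := hadjr f2 (by simp)
      have hrf3 : T.Adj r f3 := hadjr f3 (by simp)
      obtain ⟨f1', hf1'F, ha11, hd1, hd1', hNf1, hNf1'⟩ := spider_leg f1 hrf1
      obtain ⟨f2', hf2'F, ha22, hd2, hd2', hNf2, hNf2'⟩ := spider_leg f2 hrf2
      obtain ⟨f3', hf3'F, ha33, hd3, hd3', hNf3, hNf3'⟩ := spider_leg f3 hrf3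
      -- distinctness of the primes
      have hprime : ∀ {fa fa' fb fb' : V}, T.neighborFinset fa' = {fa} →
          T.Adj fb fb' → fa' = fb' → fa = fb := by
        intro fa fa' fb fb' hNa hadj heq
        have : fb ∈ T.neighborFinset fa' := by
          rw [heq]; exact (T.mem_neighborFinset fb' fb).2 hadj.symm
        rw [hNa, Finset.mem_singleton] at this
        exact this.symm
      have h1'2' : f1' ≠ f2' := fun h => h12 (hprime hNf1' ha22 h)
      have h1'3' : f1' ≠ f3' := fun h => h13 (hprime hNf1' ha33 h)
      have h2'3' : f2' ≠ f3' := fun h => h23 (hprime hNf2' ha33 h)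
      have hrne : ∀ {x : V}, T.dist r x ≠ 0 → r ≠ x := fun h he => h (he ▸ hr0)
      -- coverage
      have cov : ∀ v, v ∈ ({r, f1, f2, f3, f1', f2', f3'} : Finset V) := by
        refine dist_classify hconn r _ (by simp) ?_
        intro v w hadj _ hw
        have hvN : v ∈ T.neighborFinset w := (T.mem_neighborFinset w v).2 hadj.symm
        simp only [Finset.mem_insert, Finset.mem_singleton] at hw ⊢
        rcases hw with rfl|rfl|rfl|rfl|rfl|rfl|rfl
        · rw [hNr] at hvN
          simp only [Finset.mem_insert, Finset.mem_singleton] at hvN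
          tauto
        · rw [hNf1] at hvN
          simp only [Finset.mem_insert, Finset.mem_singleton] at hvN
          tauto
        · rw [hNf2] at hvN
          simp only [Finset.mem_insert, Finset.mem_singleton] at hvN
          tauto
        · rw [hNf3] at hvN
          simp only [Finset.mem_insert, Finset.mem_singleton] at hvN
          tauto
        · rw [hNf1', Finset.mem_singleton] at hvN
          tauto
        · rw [hNf2', Finset.mem_singleton] at hvN
          tauto
        · rw [hNf3', Finset.mem_singleton] at hvN
          tauto
      have huniv : ({f3, f3'} : Finset V) ∪ ({f1', f1, r, f2, f2'} : Finset V)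
          = Finset.univ := by
        apply Finset.eq_univ_iff_forall.2
        intro v
        have := cov v
        simp only [Finset.mem_insert, Finset.mem_singleton] at this
        simp only [Finset.mem_union, Finset.mem_insert, Finset.mem_singleton]
        tauto
      have h0 : ArisesFromK2 T {f3, f3'} := ArisesFromK2.base f3 f3' ha33
      have nf1'f1 : f1' ≠ f1 := by intro h; rw [h] at hd1'; omega
      have nf1'r : f1' ≠ r := by intro h; rw [h] at hd1'; omega
      have nf1'f2 : f1' ≠ f2 := by intro h; rw [h] at hd1'; omega
      have nf1'f3 : f1' ≠ f3 := by intro h; rw [h] at hd1'; omega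
      have nf1r : f1 ≠ r := by intro h; rw [h] at hd1; omega
      have nf1f2' : f1 ≠ f2' := by intro h; rw [h] at hd1; omega
      have nf1f3' : f1 ≠ f3' := by intro h; rw [h] at hd1; omega
      have nrf2 : r ≠ f2 := by intro h; rw [← h] at hd2; omega
      have nrf2' : r ≠ f2' := by intro h; rw [← h] at hd2'; omega
      have nrf3 : r ≠ f3 := by intro h; rw [← h] at hd3; omega
      have nrf3' : r ≠ f3' := by intro h; rw [← h] at hd3'; omega
      have nf2f2' : f2 ≠ f2' := by intro h; rw [h] at hd2; omega
      have nf2f3' : f2 ≠ f3' := by intro h; rw [h] at hd2; omega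
      have nf2'f3 : f2' ≠ f3 := by intro h; rw [h] at hd2'; omega
      have hfinal : ArisesFromK2 T (({f3, f3'} : Finset V) ∪ {f1', f1, r, f2, f2'}) := by
        refine ArisesFromK2.attach {f3, f3'} f3 f1' f1 r f2 f2' h0
          (Finset.mem_insert_self f3 {f3'}) ?_ ?_ ?_ ?_ ?_ ?_
          hrf3.symm hrf1 hrf2 ha11 ha22 ?_
        · simp only [Finset.mem_insert, Finset.mem_singleton]
          push_neg
          exact ⟨nf1'f3, h1'3'⟩
        · simp only [Finset.mem_insert, Finset.mem_singleton]
          push_neg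
          exact ⟨h13, nf1f3'⟩
        · simp only [Finset.mem_insert, Finset.mem_singleton]
          push_neg
          exact ⟨nrf3, nrf3'⟩
        · simp only [Finset.mem_insert, Finset.mem_singleton]
          push_neg
          exact ⟨h23, nf2f3'⟩
        · simp only [Finset.mem_insert, Finset.mem_singleton]
          push_neg
          exact ⟨nf2'f3, h2'3'⟩
        · exact card_five nf1'f1 nf1'r nf1'f2 h1'2' nf1r h12 nf1f2' nrf2 nrf2' nf2f2'
        · intro p hp q hq hpq
          have hqN : q ∈ T.neighborFinset p := (T.mem_neighborFinset p q).2 hpq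
          simp only [Finset.mem_insert, Finset.mem_singleton] at hp
          rcases hp with rfl|rfl|rfl|rfl|rfl
          · rw [hNf1', Finset.mem_singleton] at hqN
            subst hqN
            exact Or.inr (Or.inr (Or.inr (Or.inr (Or.inr (Or.inr (Or.inr
              (Or.inl ⟨rfl, rfl⟩)))))))
          · rw [hNf1] at hqN
            simp only [Finset.mem_insert, Finset.mem_singleton] at hqN
            rcases hqN with rfl|rfl
            · exact Or.inr (Or.inr (Or.inr (Or.inr (Or.inr (Or.inl ⟨rfl, rfl⟩)))))
            · exact Or.inr (Or.inr (Or.inr (Or.inl ⟨rfl, rfl⟩)))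
          · rw [hNr] at hqN
            simp only [Finset.mem_insert, Finset.mem_singleton] at hqN
            rcases hqN with rfl|rfl|rfl
            · exact Or.inr (Or.inl ⟨rfl, rfl⟩)
            · exact Or.inr (Or.inr (Or.inl ⟨rfl, rfl⟩))
            · exact Or.inl ⟨rfl, rfl⟩
          · rw [hNf2] at hqN
            simp only [Finset.mem_insert, Finset.mem_singleton] at hqN
            rcases hqN with rfl|rfl
            · exact Or.inr (Or.inr (Or.inr (Or.inr (Or.inr (Or.inr (Or.inl ⟨rfl, rfl⟩))))))
            · exact Or.inr (Or.inr (Or.inr (Or.inr (Or.inl ⟨rfl, rfl⟩))))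
          · rw [hNf2', Finset.mem_singleton] at hqN
            subst hqN
            exact Or.inr (Or.inr (Or.inr (Or.inr (Or.inr (Or.inr (Or.inr
              (Or.inr ⟨rfl, rfl⟩)))))))
      rw [← huniv]
      exact hfinal
    · -- general case: D ≥ 3, find a pendant P₅
      push_neg at hD2
      have hD3 : 3 ≤ T.dist r v0 := hD2
      have hv0r : v0 ≠ r := fun h => by rw [h, hr0] at hD3; omega
      obtain ⟨v1, hadj01, hdv1⟩ := exists_parent' hconn hv0r
      have hv0F : v0 ∈ F := by
        by_contra h
        exact hnoC v0 h hv0r hmax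
      obtain ⟨m0, hm0⟩ := Finset.card_eq_one.1 (P1 v0 hv0F)
      have hm0mem := hm0 ▸ Finset.mem_singleton_self m0
      have hm0F : m0 ∈ F := (Finset.mem_inter.1 hm0mem).2
      have hadj0m : T.Adj v0 m0 := (T.mem_neighborFinset v0 m0).1 (Finset.mem_inter.1 hm0mem).1
      have hm0v1 : m0 = v1 := by
        rcases adj_dist_cases' ht (r := r) hadj0m with h | h
        · exact parent_unique' ht hadj0m hadj01 h hdv1
        · exact absurd (hmax m0) (by omega)
      have hv1F : v1 ∈ F := hm0v1 ▸ hm0F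
      have hNv0F : T.neighborFinset v0 ∩ F = {v1} := hm0v1 ▸ hm0
      have hv1r : v1 ≠ r := fun h => by rw [h, hr0] at hdv1; omega
      obtain ⟨v2, hadj12, hdv2⟩ := exists_parent' hconn hv1r
      obtain ⟨m1, hm1⟩ := Finset.card_eq_one.1 (P1 v1 hv1F)
      have hv0mem : v0 ∈ T.neighborFinset v1 ∩ F :=
        Finset.mem_inter.2 ⟨(T.mem_neighborFinset v1 v0).2 hadj01.symm, hv0F⟩
      have hv0m1 : v0 = m1 := Finset.mem_singleton.1 (hm1 ▸ hv0mem)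
      have hNv1F : T.neighborFinset v1 ∩ F = {v0} := by rw [hm1, ← hv0m1]
      have hv2F : v2 ∉ F := by
        intro h
        have hmem : v2 ∈ T.neighborFinset v1 ∩ F :=
          Finset.mem_inter.2 ⟨(T.mem_neighborFinset v1 v2).2 hadj12, h⟩
        rw [hNv1F, Finset.mem_singleton] at hmem
        rw [hmem] at hdv2
        omega
      obtain ⟨hdegv2, hNv2F⟩ := P2 v2 hv2F
      have hv2r : v2 ≠ r := fun h => by rw [h, hr0] at hdv2; omega
      obtain ⟨v3, hadj23, hdv3⟩ := exists_parent' hconn hv2r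
      have hv13 : v1 ≠ v3 := fun h => by rw [← h] at hdv3; omega
      have hNv2card : (T.neighborFinset v2).card = 3 := hdegv2
      have hv1mem : v1 ∈ T.neighborFinset v2 := (T.mem_neighborFinset v2 v1).2 hadj12.symm
      have hv3mem : v3 ∈ T.neighborFinset v2 := (T.mem_neighborFinset v2 v3).2 hadj23
      have hnotsub : ¬ (T.neighborFinset v2 ⊆ {v1, v3}) := by
        intro hsub'
        have h1 := Finset.card_le_card hsub'
        have h2 : ({v1, v3} : Finset V).card ≤ 2 := Finset.card_insert_le _ _ |>.trans (by simp)
        omega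
      obtain ⟨g, hgN, hgnot⟩ := Finset.not_subset.1 hnotsub
      simp only [Finset.mem_insert, Finset.mem_singleton] at hgnot
      push_neg at hgnot
      obtain ⟨hgv1, hgv3⟩ := hgnot
      have hadj2g : T.Adj v2 g := (T.mem_neighborFinset v2 g).1 hgN
      have hgF : g ∈ F := hNv2F hgN
      have hdg : T.dist r v2 + 1 = T.dist r g := by
        rcases adj_dist_cases' ht (r := r) hadj2g with h | h
        · exact absurd (parent_unique' ht hadj2g hadj23 h hdv3) hgv3
        · exact h
      have hNv2 : T.neighborFinset v2 = {v1, v3, g} := by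
        refine (Finset.eq_of_subset_of_card_le ?_ ?_).symm
        · intro w hw
          simp only [Finset.mem_insert, Finset.mem_singleton] at hw
          rcases hw with rfl|rfl|rfl
          · exact hv1mem
          · exact hv3mem
          · exact hgN
        · have hc3 : ({v1, v3, g} : Finset V).card = 3 := by
            rw [Finset.card_insert_of_notMem (by simp [hv13, Ne.symm hgv1]),
              Finset.card_insert_of_notMem (by simp [Ne.symm hgv3]), Finset.card_singleton]
          omega
      obtain ⟨g', hNgF⟩ := Finset.card_eq_one.1 (P1 g hgF)
      have hg'mem := hNgF ▸ Finset.mem_singleton_self g'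
      have hg'F : g' ∈ F := (Finset.mem_inter.1 hg'mem).2
      have hadjgg' : T.Adj g g' := (T.mem_neighborFinset g g').1 (Finset.mem_inter.1 hg'mem).1
      have hg'v2 : g' ≠ v2 := fun h => hv2F (h ▸ hg'F)
      have hdg' : T.dist r g' = T.dist r g + 1 := by
        rcases adj_dist_cases' ht (r := r) hadjgg' with h | h
        · exact absurd (parent_unique' ht hadjgg' hadj2g.symm h hdg) hg'v2
        · omega
      -- maximality facts
      have hdg'max : T.dist r g' = T.dist r v0 := by omega
      -- neighborhoods
      have hNv0 : T.neighborFinset v0 = {v1} := by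
        apply Finset.Subset.antisymm
        · intro w hw
          have haw : T.Adj v0 w := (T.mem_neighborFinset v0 w).1 hw
          rcases adj_dist_cases' ht (r := r) haw with h | h
          · exact Finset.mem_singleton.2 (parent_unique' ht haw hadj01 h hdv1)
          · exact absurd (hmax w) (by omega)
        · intro w hw
          rw [Finset.mem_singleton] at hw
          subst hw
          exact (T.mem_neighborFinset v0 w).2 hadj01
      have hNv1 : T.neighborFinset v1 = {v0, v2} := by
        apply Finset.Subset.antisymm
        · intro w hw
          have haw : T.Adj v1 w := (T.mem_neighborFinset v1 w).1 hw
          rcases adj_dist_cases' ht (r := r) haw with h | h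
          · have := parent_unique' ht haw hadj12 h hdv2
            simp [this]
          · by_cases hwF : w ∈ F
            · have hmem : w ∈ T.neighborFinset v1 ∩ F := Finset.mem_inter.2 ⟨hw, hwF⟩
              rw [hNv1F, Finset.mem_singleton] at hmem
              simp [hmem]
            · exfalso
              refine hnoC w hwF (fun he => ?_) (fun u => ?_)
              · rw [he, hr0] at h; omega
              · have := hmax u; omega
        · intro w hw
          rcases Finset.mem_insert.1 hw with rfl | hw'
          · exact (T.mem_neighborFinset v1 w).2 hadj01.symm
          · rw [Finset.mem_singleton] at hw'
            subst hw'
            exact (T.mem_neighborFinset v1 w).2 hadj12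
      have hNg : T.neighborFinset g = {v2, g'} := by
        apply Finset.Subset.antisymm
        · intro w hw
          have haw : T.Adj g w := (T.mem_neighborFinset g w).1 hw
          rcases adj_dist_cases' ht (r := r) haw with h | h
          · have := parent_unique' ht haw hadj2g.symm h hdg
            simp [this]
          · by_cases hwF : w ∈ F
            · have hmem : w ∈ T.neighborFinset g ∩ F := Finset.mem_inter.2 ⟨hw, hwF⟩
              rw [hNgF, Finset.mem_singleton] at hmem
              simp [hmem]
            · exfalso
              refine hnoC w hwF (fun he => ?_) (fun u => ?_)
              · rw [he, hr0] at h; omega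
              · have := hmax u; omega
        · intro w hw
          rcases Finset.mem_insert.1 hw with rfl | hw'
          · exact (T.mem_neighborFinset g w).2 hadj2g.symm
          · rw [Finset.mem_singleton] at hw'
            subst hw'
            exact (T.mem_neighborFinset g w).2 hadjgg'
      have hNg' : T.neighborFinset g' = {g} := by
        apply Finset.Subset.antisymm
        · intro w hw
          have haw : T.Adj g' w := (T.mem_neighborFinset g' w).1 hw
          rcases adj_dist_cases' ht (r := r) haw with h | h
          · exact Finset.mem_singleton.2
              (parent_unique' ht haw hadjgg'.symm h (by omega))
          · exact absurd (hmax w) (by omega)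
        · intro w hw
          rw [Finset.mem_singleton] at hw
          subst hw
          exact (T.mem_neighborFinset g' w).2 hadjgg'.symm
      -- distinctness
      have ne01 : v0 ≠ v1 := fun h => by rw [h] at hdv1; omega
      have ne02 : v0 ≠ v2 := fun h => by rw [h] at hdv1; omega
      have ne0g : v0 ≠ g := fun h => by rw [h] at hdv1; omega
      have ne12 : v1 ≠ v2 := fun h => by rw [h] at hdv2; omega
      have ne1g : v1 ≠ g := Ne.symm hgv1
      have ne1g' : v1 ≠ g' := fun h => by rw [h] at hdv1; omega
      have ne2g : v2 ≠ g := fun h => by rw [h] at hdg; omega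
      have ne2g' : v2 ≠ g' := Ne.symm hg'v2
      have negg' : g ≠ g' := fun h => by rw [h] at hdg'; omega
      have ne0g' : v0 ≠ g' := by
        intro h
        have : v1 ∈ T.neighborFinset g' := by rw [← h, hNv0]; simp
        rw [hNg', Finset.mem_singleton] at this
        exact ne1g this
      have hRcard : ({v0, v1, v2, g, g'} : Finset V).card = 5 :=
        card_five ne01 ne02 ne0g ne0g' ne12 ne1g ne1g' ne2g ne2g' negg'
      have hv3R : v3 ∉ ({v0, v1, v2, g, g'} : Finset V) := by
        simp only [Finset.mem_insert, Finset.mem_singleton]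
        push_neg
        refine ⟨fun h => by rw [← h] at hdv1; omega, fun h => by rw [← h] at hdv2; omega,
          fun h => by rw [← h] at hdv3; omega, fun h => by rw [← h] at hdg; omega,
          fun h => by rw [← h] at hdg'; omega⟩
      set S' : Finset V := Finset.univ \ {v0, v1, v2, g, g'} with hS'def
      have hv3S' : v3 ∈ S' := Finset.mem_sdiff.2 ⟨Finset.mem_univ _, hv3R⟩
      set s : Set V := ↑S' with hsdef
      have hmemS : ∀ x : V, x ∈ s ↔ x ∈ S' := fun x => Finset.mem_coe
      have hcards : Fintype.card ↥s = n - 5 := by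
        have h1 : Fintype.card ↥s = S'.card :=
          Fintype.card_of_subtype S' (fun x => (hmemS x).symm)
        have h2 : S'.card = n - 5 := by
          rw [hS'def, Finset.card_sdiff_of_subset (Finset.subset_univ _), hRcard, Finset.card_univ, hn]
        omega
      -- no vertex of S' is adjacent to v0, v1, g, g'
      have hQnbr : ∀ w ∈ S', ∀ q ∈ ({v0, v1, g, g'} : Finset V), ¬ T.Adj q w := by
        intro w hwS q hq hadj
        have hwR : w ∉ ({v0, v1, v2, g, g'} : Finset V) := (Finset.mem_sdiff.1 hwS).2
        have hwN : w ∈ T.neighborFinset q := (T.mem_neighborFinset q w).2 hadj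
        simp only [Finset.mem_insert, Finset.mem_singleton] at hq hwR
        push_neg at hwR
        rcases hq with rfl|rfl|rfl|rfl
        · rw [hNv0, Finset.mem_singleton] at hwN
          exact hwR.2.1 hwN
        · rw [hNv1] at hwN
          simp only [Finset.mem_insert, Finset.mem_singleton] at hwN
          rcases hwN with rfl|rfl
          · exact hwR.1 rfl
          · exact hwR.2.2.1 rfl
        · rw [hNg] at hwN
          simp only [Finset.mem_insert, Finset.mem_singleton] at hwN
          rcases hwN with rfl|rfl
          · exact hwR.2.2.1 rfl
          · exact hwR.2.2.2.2 rfl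
        · rw [hNg', Finset.mem_singleton] at hwN
          exact hwR.2.2.2.1 hwN
      -- connectivity of the induced graph
      have hreach : ∀ v, ∀ hv : v ∈ S', (T.induce s).Reachable ⟨v3, hv3S'⟩ ⟨v, hv⟩ := by
        have key := dist_classify hconn v3
          (fun v => ∀ hv : v ∈ S', (T.induce s).Reachable ⟨v3, hv3S'⟩ ⟨v, hv⟩)
          (fun hv => Reachable.refl _) ?_
        · exact key
        · intro v w hadj _ hPw hv
          by_cases hwR : w ∈ ({v0, v1, v2, g, g'} : Finset V)
          · have hvN : v ∈ T.neighborFinset w := (T.mem_neighborFinset w v).2 hadj.symm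
            have hvR : v ∉ ({v0, v1, v2, g, g'} : Finset V) := (Finset.mem_sdiff.1 hv).2
            simp only [Finset.mem_insert, Finset.mem_singleton] at hwR hvR
            push_neg at hvR
            rcases hwR with rfl|rfl|rfl|rfl|rfl
            · rw [hNv0, Finset.mem_singleton] at hvN
              exact absurd hvN hvR.2.1
            · rw [hNv1] at hvN
              simp only [Finset.mem_insert, Finset.mem_singleton] at hvN
              rcases hvN with rfl|rfl
              · exact absurd rfl hvR.1
              · exact absurd rfl hvR.2.2.1
            · rw [hNv2] at hvN
              simp only [Finset.mem_insert, Finset.mem_singleton] at hvN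
              rcases hvN with rfl|rfl|rfl
              · exact absurd rfl hvR.2.1
              · exact Reachable.refl _
              · exact absurd rfl hvR.2.2.2.1
            · rw [hNg] at hvN
              simp only [Finset.mem_insert, Finset.mem_singleton] at hvN
              rcases hvN with rfl|rfl
              · exact absurd rfl hvR.2.2.1
              · exact absurd rfl hvR.2.2.2.2
            · rw [hNg', Finset.mem_singleton] at hvN
              exact absurd hvN hvR.2.2.2.1
          · have hwS : w ∈ S' := Finset.mem_sdiff.2 ⟨Finset.mem_univ _, hwR⟩
            have h1 := hPw hwS
            have h2 : (T.induce s).Adj ⟨w, hwS⟩ ⟨v, hv⟩ := hadj.symm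
            exact h1.trans h2.reachable
      have hT'conn : (T.induce s).Connected := by
        rw [SimpleGraph.connected_iff]
        refine ⟨fun a b => ?_, ⟨⟨v3, hv3S'⟩⟩⟩
        obtain ⟨a, ha⟩ := a
        obtain ⟨b, hb⟩ := b
        exact (hreach a ha).symm.trans (hreach b hb)
      have hT'acyc : (T.induce s).IsAcyclic := by
        intro v c hc
        have hemb : T.induce s ↪g T := SimpleGraph.Embedding.induce s
        exact ht.IsAcyclic (c.map hemb.toHom) (hc.map hemb.injective)
      have hT'tree : (T.induce s).IsTree := ⟨hT'conn, hT'acyc⟩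
      have hT'sub : Subcubic (T.induce s) := by
        intro a
        obtain ⟨v, hv⟩ := a
        have himg : Subtype.val '' ((T.induce s).neighborSet ⟨v, hv⟩) ⊆ T.neighborSet v := by
          rintro _ ⟨⟨w, hw⟩, hwN, rfl⟩
          exact hwN
        calc ((T.induce s).neighborSet ⟨v, hv⟩).ncard
            = (Subtype.val '' ((T.induce s).neighborSet ⟨v, hv⟩)).ncard :=
              (Set.ncard_image_of_injective _ Subtype.val_injective).symm
          _ ≤ (T.neighborSet v).ncard := Set.ncard_le_ncard himg (Set.toFinite _)
          _ ≤ 3 := hsub v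
      -- the dissociation number of the induced graph
      have hQcard4 : ({v0, v1, g, g'} : Finset V).card = 4 := by
        rw [Finset.card_insert_of_notMem (by simp [ne01, ne0g, ne0g']),
          Finset.card_insert_of_notMem (by simp [ne1g, ne1g']),
          Finset.card_insert_of_notMem (by simp [negg']), Finset.card_singleton]
      have hFinterR : F ∩ ({v0, v1, v2, g, g'} : Finset V) = {v0, v1, g, g'} := by
        ext x
        simp only [Finset.mem_inter, Finset.mem_insert, Finset.mem_singleton]
        constructor
        · rintro ⟨hxF, rfl|rfl|rfl|rfl|rfl⟩
          · exact Or.inl rfl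
          · exact Or.inr (Or.inl rfl)
          · exact absurd hxF hv2F
          · exact Or.inr (Or.inr (Or.inl rfl))
          · exact Or.inr (Or.inr (Or.inr rfl))
        · rintro (rfl|rfl|rfl|rfl)
          · exact ⟨hv0F, Or.inl rfl⟩
          · exact ⟨hv1F, Or.inr (Or.inl rfl)⟩
          · exact ⟨hgF, Or.inr (Or.inr (Or.inr (Or.inl rfl)))⟩
          · exact ⟨hg'F, Or.inr (Or.inr (Or.inr (Or.inr rfl)))⟩
      have hFRcard : (F \ ({v0, v1, v2, g, g'} : Finset V)).card = F.card - 4 := by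
        have := Finset.card_sdiff_add_card_inter F ({v0, v1, v2, g, g'} : Finset V)
        rw [hFinterR, hQcard4] at this
        omega
      have hFRsub : F \ ({v0, v1, v2, g, g'} : Finset V) ⊆ S' := fun x hx =>
        Finset.mem_sdiff.2 ⟨Finset.mem_univ _, (Finset.mem_sdiff.1 hx).2⟩
      have hlow : F.card - 4 ≤ dissocNum (T.induce s) := by
        set F₀ : Finset ↥s :=
          (F \ ({v0, v1, v2, g, g'} : Finset V)).subtype (· ∈ s) with hF₀def
        have hF₀card : F₀.card = F.card - 4 := by
          rw [hF₀def, Finset.card_subtype,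
            Finset.filter_true_of_mem (fun x hx => (hmemS x).2 (hFRsub hx))]
          exact hFRcard
        have hF₀dissoc : IsDissocSet (T.induce s) F₀ := by
          intro a ha b hb c hc h1 h2
          have haF : (a : V) ∈ F := (Finset.mem_sdiff.1 (Finset.mem_subtype.1 ha)).1
          have hbF : (b : V) ∈ F := (Finset.mem_sdiff.1 (Finset.mem_subtype.1 hb)).1
          have hcF : (c : V) ∈ F := (Finset.mem_sdiff.1 (Finset.mem_subtype.1 hc)).1
          exact Subtype.ext (hF a haF b hbF c hcF h1 h2)
        exact hF₀card ▸ le_dissocNum hF₀dissoc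
      have hupp : dissocNum (T.induce s) + 4 ≤ F.card := by
        obtain ⟨Fm, hFm, hFmc⟩ := exists_max_dissoc (T := T.induce s)
        set A : Finset V := Fm.image Subtype.val with hAdef
        have hAS : A ⊆ S' := by
          intro x hx
          obtain ⟨w, _, rfl⟩ := Finset.mem_image.1 hx
          exact (hmemS _).1 w.2
        have hdisj : Disjoint A ({v0, v1, g, g'} : Finset V) := by
          rw [Finset.disjoint_left]
          intro x hxA hxQ
          have hxS : x ∈ S' := hAS hxA
          have hxR : x ∉ ({v0, v1, v2, g, g'} : Finset V) := (Finset.mem_sdiff.1 hxS).2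
          simp only [Finset.mem_insert, Finset.mem_singleton] at hxQ hxR
          tauto
        have hv2B : v2 ∉ A ∪ ({v0, v1, g, g'} : Finset V) := by
          intro hmem
          rcases Finset.mem_union.1 hmem with h | h
          · exact (Finset.mem_sdiff.1 (hAS h)).2 (by simp)
          · simp only [Finset.mem_insert, Finset.mem_singleton] at h
            rcases h with h|h|h|h
            · exact ne02 h.symm
            · exact ne12 h.symm
            · exact ne2g h
            · exact ne2g' h
        have hBdissoc : IsDissocSet T (A ∪ ({v0, v1, g, g'} : Finset V)) := by
          intro v hvB u huB w hwB h1 h2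
          rcases Finset.mem_union.1 hvB with hvA | hvQ
          · have hvS : v ∈ S' := hAS hvA
            have hu' : u ∈ A := by
              rcases Finset.mem_union.1 huB with h | h
              · exact h
              · exact absurd h1.symm (hQnbr v hvS u h)
            have hw' : w ∈ A := by
              rcases Finset.mem_union.1 hwB with h | h
              · exact h
              · exact absurd h2.symm (hQnbr v hvS w h)
            obtain ⟨v₀, hv₀, rfl⟩ := Finset.mem_image.1 hvA
            obtain ⟨u₀, hu₀, rfl⟩ := Finset.mem_image.1 hu'
            obtain ⟨w₀, hw₀, rfl⟩ := Finset.mem_image.1 hw'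
            have := hFm v₀ hv₀ u₀ hu₀ w₀ hw₀ h1 h2
            exact congrArg Subtype.val this
          · have hmem1 : u ∈ T.neighborFinset v := (T.mem_neighborFinset v u).2 h1
            have hmem2 : w ∈ T.neighborFinset v := (T.mem_neighborFinset v w).2 h2
            simp only [Finset.mem_insert, Finset.mem_singleton] at hvQ
            rcases hvQ with rfl|rfl|rfl|rfl
            · rw [hNv0, Finset.mem_singleton] at hmem1 hmem2
              rw [hmem1, hmem2]
            · rw [hNv1] at hmem1 hmem2
              simp only [Finset.mem_insert, Finset.mem_singleton] at hmem1 hmem2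
              rcases hmem1 with rfl|rfl
              · rcases hmem2 with rfl|rfl
                · rfl
                · exact absurd hwB hv2B
              · exact absurd huB hv2B
            · rw [hNg] at hmem1 hmem2
              simp only [Finset.mem_insert, Finset.mem_singleton] at hmem1 hmem2
              rcases hmem1 with rfl|rfl
              · exact absurd huB hv2B
              · rcases hmem2 with rfl|rfl
                · exact absurd hwB hv2B
                · rfl
            · rw [hNg', Finset.mem_singleton] at hmem1 hmem2
              rw [hmem1, hmem2]
        have hle := le_dissocNum hBdissoc
        rw [Finset.card_union_of_disjoint hdisj, hQcard4,
          Finset.card_image_of_injective _ Subtype.val_injective, ← hFc] at hle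
        omega
      have h4F : 4 ≤ F.card := by
        have hsubQ : ({v0, v1, g, g'} : Finset V) ⊆ F := by
          intro x hx
          simp only [Finset.mem_insert, Finset.mem_singleton] at hx
          rcases hx with rfl|rfl|rfl|rfl
          · exact hv0F
          · exact hv1F
          · exact hgF
          · exact hg'F
        have := Finset.card_le_card hsubQ
        omega
      have hn5 : 5 ≤ n := by
        have := Finset.card_le_card (Finset.subset_univ ({v0, v1, v2, g, g'} : Finset V))
        rw [hRcard, Finset.card_univ, hn] at this
        exact this
      have hpsi' : 5 * dissocNum (T.induce s) = 4 * (n - 5) + 2 := by omega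
      have harises' := IH (n - 5) (by omega) ↥s (T.induce s) hcards hT'tree hT'sub hpsi'
      have hlift := arises_lift T s harises'
      have huniveq : (Finset.univ : Finset ↥s).image Subtype.val = S' := by
        ext x
        constructor
        · intro hx
          obtain ⟨w, _, rfl⟩ := Finset.mem_image.1 hx
          exact (hmemS _).1 w.2
        · intro hx
          exact Finset.mem_image.2 ⟨⟨x, (hmemS x).2 hx⟩, Finset.mem_univ _, rfl⟩
      rw [huniveq] at hlift
      have hfinal : ArisesFromK2 T (S' ∪ ({v0, v1, v2, g, g'} : Finset V)) := by
        refine ArisesFromK2.attach S' v3 v0 v1 v2 g g' hlift hv3S' ?_ ?_ ?_ ?_ ?_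
          hRcard hadj23.symm hadj12.symm hadj2g hadj01.symm hadjgg' ?_
        · exact fun h => (Finset.mem_sdiff.1 h).2 (by simp)
        · exact fun h => (Finset.mem_sdiff.1 h).2 (by simp)
        · exact fun h => (Finset.mem_sdiff.1 h).2 (by simp)
        · exact fun h => (Finset.mem_sdiff.1 h).2 (by simp)
        · exact fun h => (Finset.mem_sdiff.1 h).2 (by simp)
        · intro p hp q hq hpq
          have hqN : q ∈ T.neighborFinset p := (T.mem_neighborFinset p q).2 hpq
          simp only [Finset.mem_insert, Finset.mem_singleton] at hp
          rcases hp with rfl|rfl|rfl|rfl|rfl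
          · rw [hNv0, Finset.mem_singleton] at hqN
            subst hqN
            exact Or.inr (Or.inr (Or.inr (Or.inr (Or.inr (Or.inr (Or.inr
              (Or.inl ⟨rfl, rfl⟩)))))))
          · rw [hNv1] at hqN
            simp only [Finset.mem_insert, Finset.mem_singleton] at hqN
            rcases hqN with rfl|rfl
            · exact Or.inr (Or.inr (Or.inr (Or.inl ⟨rfl, rfl⟩)))
            · exact Or.inr (Or.inr (Or.inr (Or.inr (Or.inr (Or.inl ⟨rfl, rfl⟩)))))
          · rw [hNv2] at hqN
            simp only [Finset.mem_insert, Finset.mem_singleton] at hqN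
            rcases hqN with rfl|rfl|rfl
            · exact Or.inr (Or.inl ⟨rfl, rfl⟩)
            · exact Or.inl ⟨rfl, rfl⟩
            · exact Or.inr (Or.inr (Or.inl ⟨rfl, rfl⟩))
          · rw [hNg] at hqN
            simp only [Finset.mem_insert, Finset.mem_singleton] at hqN
            rcases hqN with rfl|rfl
            · exact Or.inr (Or.inr (Or.inr (Or.inr (Or.inr (Or.inr (Or.inl ⟨rfl, rfl⟩))))))
            · exact Or.inr (Or.inr (Or.inr (Or.inr (Or.inl ⟨rfl, rfl⟩))))
          · rw [hNg', Finset.mem_singleton] at hqN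
            subst hqN
            exact Or.inr (Or.inr (Or.inr (Or.inr (Or.inr (Or.inr (Or.inr
              (Or.inr ⟨rfl, rfl⟩)))))))
      have hcover : S' ∪ ({v0, v1, v2, g, g'} : Finset V) = Finset.univ :=
        Finset.sdiff_union_of_subset (Finset.subset_univ _)
      rw [← hcover]
      exact hfinal

/-- If `T` is a subcubic tree of order `n` with dissociation number `ψ = (4n+2)/5`,
then `T` arises from `K₂` by iteratively attaching `P₅`s. -/
theorem arisesFromK2_of_dissocNum {V : Type*} [Fintype V] [DecidableEq V] (T : SimpleGraph V)
    (hT : T.IsTree) (hsub : Subcubic T)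
    (hpsi : 5 * dissocNum T = 4 * Fintype.card V + 2) :
    ArisesFromK2 T Finset.univ := by
  exact main_aux (Fintype.card V) V T rfl hT hsub hpsi
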